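/- arXiv:1206.3369 — 4 statements merged into one kernel-verified Lean document; each statement's English description precedes it below -/
import Mathlib

section
/- Let a₁,b₁,a₂,b₂ be positive reals with a₁b₂ − b₁a₂ = 1, set a₃ = a₁+a₂, b₃ = b₁+b₂, and let n > 0. The point on the curve H(u,v) = n (with H(u,v) = (b₂(u+c₁) − b₁(v+c₂))(a₁(v+c₂) − a₂(u+c₁))) where dv/du = −1 has coordinates u_tan = (a₁b₂ + b₁a₂ + 2a₁b₁)√(n/(a₃b₃)) − c₁ and v_tan = (a₁b₂ + b₁a₂ + 2a₂b₂)√(n/(a₃b₃)) − c₂. -/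
/-!
In the shifted coordinates x = u + c₁, y = v + c₂ the two factors of H are the linear forms
L₁ = b₂x − b₁y and L₂ = a₁y − a₂x. Because a₁b₂ − b₁a₂ = 1, at the given point they take the
values s·b₃ and s·a₃ with s = √(n/(a₃b₃)), so H = s²a₃b₃ = n. The partial derivatives of H are
b₂L₂ − a₂L₁ and a₁L₁ − b₁L₂; they agree (slope −1) exactly when b₃L₂ = a₃L₁, which holds there.
-/

section Hyperbola

variable (a₁ b₁ a₂ b₂ c₁ c₂ : ℝ)

def hyperbolaForm (u v : ℝ) : ℝ :=
  (b₂ * (u + c₁) - b₁ * (v + c₂)) * (a₁ * (v + c₂) - a₂ * (u + c₁))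

theorem hasDerivAt_hyperbolaForm_left (u v : ℝ) :
    HasDerivAt (fun u => hyperbolaForm a₁ b₁ a₂ b₂ c₁ c₂ u v)
      (b₂ * (a₁ * (v + c₂) - a₂ * (u + c₁)) - a₂ * (b₂ * (u + c₁) - b₁ * (v + c₂))) u := by
  have h₁ : HasDerivAt (fun u => b₂ * (u + c₁) - b₁ * (v + c₂)) b₂ u := by
    simpa using (((hasDerivAt_id u).add_const c₁).const_mul b₂).sub_const (b₁ * (v + c₂))
  have h₂ : HasDerivAt (fun u => a₁ * (v + c₂) - a₂ * (u + c₁)) (-a₂) u := by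
    simpa using (((hasDerivAt_id u).add_const c₁).const_mul a₂).const_sub (a₁ * (v + c₂))
  exact (h₁.mul h₂).congr_deriv (by ring)

theorem hasDerivAt_hyperbolaForm_right (u v : ℝ) :
    HasDerivAt (fun v => hyperbolaForm a₁ b₁ a₂ b₂ c₁ c₂ u v)
      (a₁ * (b₂ * (u + c₁) - b₁ * (v + c₂)) - b₁ * (a₁ * (v + c₂) - a₂ * (u + c₁))) v := by
  have h₁ : HasDerivAt (fun v => b₂ * (u + c₁) - b₁ * (v + c₂)) (-b₁) v := by
    simpa using (((hasDerivAt_id v).add_const c₂).const_mul b₁).const_sub (b₂ * (u + c₁))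
  have h₂ : HasDerivAt (fun v => a₁ * (v + c₂) - a₂ * (u + c₁)) a₁ v := by
    simpa using (((hasDerivAt_id v).add_const c₂).const_mul a₁).sub_const (a₂ * (u + c₁))
  exact (h₁.mul h₂).congr_deriv (by ring)

theorem tangent_left_factor (hdet : a₁ * b₂ - b₁ * a₂ = 1) (s : ℝ) :
    b₂ * ((a₁ * b₂ + b₁ * a₂ + 2 * a₁ * b₁) * s) - b₁ * ((a₁ * b₂ + b₁ * a₂ + 2 * a₂ * b₂) * s)
      = s * (b₁ + b₂) := by
  linear_combination (b₁ + b₂) * s * hdet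

theorem tangent_right_factor (hdet : a₁ * b₂ - b₁ * a₂ = 1) (s : ℝ) :
    a₁ * ((a₁ * b₂ + b₁ * a₂ + 2 * a₂ * b₂) * s) - a₂ * ((a₁ * b₂ + b₁ * a₂ + 2 * a₁ * b₁) * s)
      = s * (a₁ + a₂) := by
  linear_combination (a₁ + a₂) * s * hdet

end Hyperbola

theorem tangent_point_slope_neg_one (a₁ b₁ a₂ b₂ c₁ c₂ n : ℝ)
    (ha₁ : 0 < a₁) (hb₁ : 0 < b₁) (ha₂ : 0 < a₂) (hb₂ : 0 < b₂)
    (hdet : a₁ * b₂ - b₁ * a₂ = 1) (hn : 0 < n) :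
    let a₃ := a₁ + a₂
    let b₃ := b₁ + b₂
    let H : ℝ → ℝ → ℝ := fun u v =>
      (b₂ * (u + c₁) - b₁ * (v + c₂)) * (a₁ * (v + c₂) - a₂ * (u + c₁))
    let utan := (a₁ * b₂ + b₁ * a₂ + 2 * a₁ * b₁) * Real.sqrt (n / (a₃ * b₃)) - c₁
    let vtan := (a₁ * b₂ + b₁ * a₂ + 2 * a₂ * b₂) * Real.sqrt (n / (a₃ * b₃)) - c₂
    H utan vtan = n ∧
      deriv (fun u => H u vtan) utan = deriv (fun v => H utan v) vtan := by
  intro a₃ b₃ H utan vtan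
  set s := Real.sqrt (n / (a₃ * b₃))
  have hL₁ : b₂ * (utan + c₁) - b₁ * (vtan + c₂) = s * b₃ := by
    simpa only [utan, vtan, sub_add_cancel] using tangent_left_factor a₁ b₁ a₂ b₂ hdet s
  have hL₂ : a₁ * (vtan + c₂) - a₂ * (utan + c₁) = s * a₃ := by
    simpa only [utan, vtan, sub_add_cancel] using tangent_right_factor a₁ b₁ a₂ b₂ hdet s
  refine ⟨?_, ?_⟩
  · calc H utan vtan = s * s * (a₃ * b₃) := by simp only [H, hL₁, hL₂]; ring
      _ = n := by rw [Real.mul_self_sqrt (by positivity), div_mul_cancel₀ n (by positivity)]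
  · show deriv (fun u => hyperbolaForm a₁ b₁ a₂ b₂ c₁ c₂ u vtan) utan
      = deriv (fun v => hyperbolaForm a₁ b₁ a₂ b₂ c₁ c₂ utan v) vtan
    rw [(hasDerivAt_hyperbolaForm_left a₁ b₁ a₂ b₂ c₁ c₂ utan vtan).deriv,
      (hasDerivAt_hyperbolaForm_right a₁ b₁ a₂ b₂ c₁ c₂ utan vtan).deriv, hL₁, hL₂]
    ring
end

section
/- For every positive integer n, T₃(n) = 3·Σ_{z=1}^{⌊n^{1/3}⌋} ( 2·S(⌊n/z⌋, z+1, ⌊√(n/z)⌋) − ⌊√(n/z)⌋² + ⌊n/z²⌋ ) + ⌊n^{1/3}⌋³, where S(m, x₁, x₂) = Σ_{x=x₁}^{x₂} ⌊m/x⌋. -/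
/-!
Classify a triple by its minimum `z` and by the places where the minimum is attained. Cyclic
rotation preserves the set of triples, so the triples with a strict minimum in a given place, and
those whose minimum is attained in exactly a given pair of places, each form three equinumerous
classes. For a strict minimum `z` the other two coordinates are the lattice points `x, y > z`
under the hyperbola `xy = ⌊n/z⌋`, which Dirichlet's hyperbola method counts as
`2·S(⌊n/z⌋, z+1, s) - s² + z²` with `s = ⌊√(n/z)⌋`; a minimum attained twice leaves `⌊n/z²⌋ - z`
choices for the third coordinate; and there is one triple `(z, z, z)` for each `z ≤ ⌊n^{1/3}⌋`.
The leftover `∑ (3z² - 3z + 1)` telescopes to `⌊n^{1/3}⌋³`.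
-/

open Finset

def icbrt (n : ℕ) : ℕ :=
  Finset.sup ((Finset.range (n + 1)).filter (fun m => m ^ 3 ≤ n)) id

lemma icbrt_pow_three_le (n : ℕ) : icbrt n ^ 3 ≤ n := by
  obtain ⟨m, hm, hsup⟩ := exists_mem_eq_sup ((range (n + 1)).filter (fun m => m ^ 3 ≤ n))
    ⟨0, by simp⟩ id
  rw [icbrt, hsup]
  exact (mem_filter.mp hm).2

lemma le_icbrt_iff {m n : ℕ} : m ≤ icbrt n ↔ m ^ 3 ≤ n := by
  refine ⟨fun h => (Nat.pow_le_pow_left h 3).trans (icbrt_pow_three_le n), fun h => ?_⟩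
  have hmn : m ≤ n := (Nat.le_self_pow three_ne_zero m).trans h
  exact le_sup (f := id) (mem_filter.mpr ⟨mem_range.mpr (Nat.lt_succ_of_le hmn), h⟩)

lemma card_filter_rotate {α : Type*} (s : Finset (α × α × α))
    (hs : ∀ p ∈ s, (p.2.1, p.2.2, p.1) ∈ s) (P : α × α × α → Prop) [DecidablePred P] :
    #(s.filter fun p => P (p.2.1, p.2.2, p.1)) = #(s.filter P) := by
  refine card_nbij' (fun p => (p.2.1, p.2.2, p.1)) (fun p => (p.2.2, p.1, p.2.1)) ?_ ?_ ?_ ?_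
  · intro p hp
    simp only [mem_coe, mem_filter] at hp ⊢
    exact ⟨hs p hp.1, hp.2⟩
  · intro p hp
    simp only [mem_coe, mem_filter] at hp ⊢
    exact ⟨hs _ (hs p hp.1), hp.2⟩
  · intro p _; rfl
  · intro p _; rfl

lemma card_eq_of_rotate_mem (s : Finset (ℕ × ℕ × ℕ)) (hs : ∀ p ∈ s, (p.2.1, p.2.2, p.1) ∈ s) :
    #s = 3 * #(s.filter fun p => p.2.2 < p.1 ∧ p.2.2 < p.2.1)
      + 3 * #(s.filter fun p => p.1 = p.2.1 ∧ p.1 < p.2.2)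
      + #(s.filter fun p => p.1 = p.2.1 ∧ p.2.1 = p.2.2) := by
  have h : #s = #(s.filter fun p => p.2.2 < p.1 ∧ p.2.2 < p.2.1)
      + #(s.filter fun p => p.1 < p.2.1 ∧ p.1 < p.2.2)
      + #(s.filter fun p => p.2.1 < p.2.2 ∧ p.2.1 < p.1)
      + #(s.filter fun p => p.1 = p.2.1 ∧ p.1 < p.2.2)
      + #(s.filter fun p => p.2.1 = p.2.2 ∧ p.2.1 < p.1)
      + #(s.filter fun p => p.2.2 = p.1 ∧ p.2.2 < p.2.1)
      + #(s.filter fun p => p.1 = p.2.1 ∧ p.2.1 = p.2.2) := by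
    simp only [card_filter, ← sum_add_distrib, card_eq_sum_ones s]
    refine sum_congr rfl fun p _ => ?_
    split_ifs <;> omega
  rw [card_filter_rotate s hs (fun p => p.1 < p.2.1 ∧ p.1 < p.2.2),
    card_filter_rotate s hs (fun p => p.2.1 = p.2.2 ∧ p.2.1 < p.1),
    card_filter_rotate s hs (fun p => p.2.2 < p.1 ∧ p.2.2 < p.2.1),
    card_filter_rotate s hs (fun p => p.1 = p.2.1 ∧ p.1 < p.2.2)] at h
  omega

def hyperbolaRegion (m z : ℕ) : Finset (ℕ × ℕ) :=
  (Icc (z + 1) m ×ˢ Icc (z + 1) m).filter fun p => p.1 * p.2 ≤ m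

lemma mem_hyperbolaRegion {m z : ℕ} {p : ℕ × ℕ} :
    p ∈ hyperbolaRegion m z ↔ z < p.1 ∧ z < p.2 ∧ p.1 * p.2 ≤ m := by
  obtain ⟨x, y⟩ := p
  simp only [hyperbolaRegion, mem_filter, mem_product, mem_Icc]
  constructor
  · rintro ⟨⟨⟨hx, -⟩, hy, -⟩, h⟩
    exact ⟨hx, hy, h⟩
  · rintro ⟨hx, hy, h⟩
    exact ⟨⟨⟨hx, by nlinarith⟩, hy, by nlinarith⟩, h⟩

lemma card_filter_fst_le_hyperbolaRegion (m z t : ℕ) :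
    #((hyperbolaRegion m z).filter fun p => p.1 ≤ t) = ∑ x ∈ Icc (z + 1) t, (m / x - z) := by
  have hsigma : #((hyperbolaRegion m z).filter fun p => p.1 ≤ t)
      = #((Icc (z + 1) t).sigma fun x => Icc (z + 1) (m / x)) := by
    refine card_nbij' (fun p => ⟨p.1, p.2⟩) (fun q => (q.1, q.2)) ?_ ?_ ?_ ?_
    · rintro ⟨x, y⟩ hp
      simp only [mem_coe, mem_filter, mem_hyperbolaRegion, mem_sigma, mem_Icc] at hp ⊢
      refine ⟨⟨hp.1.1, hp.2⟩, hp.1.2.1, (Nat.le_div_iff_mul_le (by omega)).mpr ?_⟩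
      linarith [hp.1.2.2, mul_comm x y]
    · rintro ⟨x, y⟩ hq
      simp only [mem_coe, mem_filter, mem_hyperbolaRegion, mem_sigma, mem_Icc] at hq ⊢
      refine ⟨⟨hq.1.1, hq.2.1, ?_⟩, hq.1.2⟩
      linarith [(Nat.le_div_iff_mul_le (by omega)).mp hq.2.2, mul_comm x y]
    · intro p _; rfl
    · intro q _; rfl
  rw [hsigma, card_sigma]
  simp only [Nat.card_Icc, Nat.add_sub_add_right]

lemma card_filter_snd_le_hyperbolaRegion (m z t : ℕ) :
    #((hyperbolaRegion m z).filter fun p => p.2 ≤ t)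
      = #((hyperbolaRegion m z).filter fun p => p.1 ≤ t) := by
  refine card_nbij' Prod.swap Prod.swap ?_ ?_ (fun p _ => p.swap_swap) (fun p _ => p.swap_swap) <;>
  · rintro ⟨x, y⟩ hp
    simp only [mem_coe, mem_filter, mem_hyperbolaRegion, Prod.swap_prod_mk] at hp ⊢
    exact ⟨⟨hp.1.2.1, hp.1.1, by linarith [hp.1.2.2, mul_comm x y]⟩, hp.2⟩

lemma card_hyperbolaRegion {m z : ℕ} (hz : z ≤ Nat.sqrt m) :
    (#(hyperbolaRegion m z) : ℤ)
      = 2 * ∑ x ∈ Icc (z + 1) (Nat.sqrt m), ((m / x : ℕ) : ℤ)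
        - (Nat.sqrt m : ℤ) ^ 2 + (z : ℤ) ^ 2 := by
  set s := Nat.sqrt m
  set R := hyperbolaRegion m z
  have hunion : (R.filter fun p => p.1 ≤ s) ∪ (R.filter fun p => p.2 ≤ s) = R := by
    rw [← filter_or]
    refine filter_true_of_mem fun p hp => ?_
    -- no point has both coordinates above `s`, as `(s + 1) ^ 2 > m`
    by_contra! h
    have : m < (s + 1) * (s + 1) := Nat.lt_succ_sqrt m
    have := (mem_hyperbolaRegion.mp hp).2.2
    nlinarith
  have hinter : (R.filter fun p => p.1 ≤ s) ∩ (R.filter fun p => p.2 ≤ s)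
      = Icc (z + 1) s ×ˢ Icc (z + 1) s := by
    ext ⟨x, y⟩
    simp only [← filter_and, mem_filter, mem_hyperbolaRegion, R, mem_product, mem_Icc]
    have : s * s ≤ m := Nat.sqrt_le m
    constructor
    · rintro ⟨⟨hx, hy, -⟩, hxs, hys⟩
      exact ⟨⟨hx, hxs⟩, hy, hys⟩
    · rintro ⟨⟨hx, hxs⟩, hy, hys⟩
      exact ⟨⟨hx, hy, by nlinarith⟩, hxs, hys⟩
  have hterm : ∀ x ∈ Icc (z + 1) s, ((m / x - z : ℕ) : ℤ) = ((m / x : ℕ) : ℤ) - z := by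
    intro x hx
    rw [mem_Icc] at hx
    have : z * x ≤ m := by nlinarith [Nat.sqrt_le m]
    exact Nat.cast_sub ((Nat.le_div_iff_mul_le (by omega)).mpr this)
  have hcard := card_union_add_card_inter (R.filter fun p => p.1 ≤ s) (R.filter fun p => p.2 ≤ s)
  rw [hunion, hinter, card_filter_snd_le_hyperbolaRegion, card_filter_fst_le_hyperbolaRegion,
    card_product, Nat.card_Icc] at hcard
  have hcast : (#R : ℤ)
      = 2 * ∑ x ∈ Icc (z + 1) s, ((m / x - z : ℕ) : ℤ) - ((s - z : ℕ) : ℤ) ^ 2 := by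
    have := congrArg (Nat.cast : ℕ → ℤ) hcard
    push_cast at this
    linarith
  rw [hcast, sum_congr rfl hterm, sum_sub_distrib, sum_const, Nat.card_Icc, Nat.add_sub_add_right,
    nsmul_eq_mul, Nat.cast_sub hz]
  ring

def triplesProdLe (n : ℕ) : Finset (ℕ × ℕ × ℕ) :=
  (Icc 1 n ×ˢ Icc 1 n ×ˢ Icc 1 n).filter fun p => p.1 * p.2.1 * p.2.2 ≤ n

lemma mem_triplesProdLe {n : ℕ} {p : ℕ × ℕ × ℕ} :
    p ∈ triplesProdLe n ↔ 0 < p.1 ∧ 0 < p.2.1 ∧ 0 < p.2.2 ∧ p.1 * p.2.1 * p.2.2 ≤ n := by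
  obtain ⟨x, y, z⟩ := p
  simp only [triplesProdLe, mem_filter, mem_product, mem_Icc]
  constructor
  · rintro ⟨⟨⟨hx, -⟩, ⟨hy, -⟩, hz, -⟩, h⟩
    exact ⟨hx, hy, hz, h⟩
  · rintro ⟨hx, hy, hz, h⟩
    have hxy : 0 < x * y := Nat.mul_pos hx hy
    exact ⟨⟨⟨hx, by nlinarith⟩, ⟨hy, by nlinarith⟩, hz, by nlinarith⟩, h⟩

lemma rotate_mem_triplesProdLe {n : ℕ} :
    ∀ p ∈ triplesProdLe n, (p.2.1, p.2.2, p.1) ∈ triplesProdLe n := by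
  rintro ⟨x, y, z⟩ hp
  rw [mem_triplesProdLe] at hp ⊢
  exact ⟨hp.2.1, hp.2.2.1, hp.1, by linarith [hp.2.2.2, mul_comm x (y * z), mul_assoc x y z]⟩

lemma pow_three_le_of_le_of_le {x y z n : ℕ} (hx : z ≤ x) (hy : z ≤ y) (h : x * y * z ≤ n) :
    z ^ 3 ≤ n :=
  calc z ^ 3 = z * z * z := by ring
    _ ≤ x * y * z := by gcongr
    _ ≤ n := h

lemma card_filter_strictMin_triplesProdLe (n : ℕ) :
    #((triplesProdLe n).filter fun p => p.2.2 < p.1 ∧ p.2.2 < p.2.1)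
      = ∑ z ∈ Icc 1 (icbrt n), #(hyperbolaRegion (n / z) z) := by
  rw [← card_sigma]
  refine card_nbij' (fun p => ⟨p.2.2, (p.1, p.2.1)⟩) (fun q => (q.2.1, q.2.2, q.1)) ?_ ?_ ?_ ?_
  · rintro ⟨x, y, z⟩ hp
    simp only [mem_coe, mem_filter, mem_triplesProdLe, mem_sigma, mem_Icc, mem_hyperbolaRegion,
      le_icbrt_iff] at hp ⊢
    obtain ⟨⟨-, -, hz, h⟩, hzx, hzy⟩ := hp
    exact ⟨⟨hz, pow_three_le_of_le_of_le hzx.le hzy.le h⟩, hzx, hzy,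
      (Nat.le_div_iff_mul_le hz).mpr h⟩
  · rintro ⟨z, x, y⟩ hq
    simp only [mem_coe, mem_filter, mem_triplesProdLe, mem_sigma, mem_Icc, mem_hyperbolaRegion,
      le_icbrt_iff] at hq ⊢
    obtain ⟨⟨hz, -⟩, hzx, hzy, h⟩ := hq
    exact ⟨⟨by omega, by omega, hz, (Nat.le_div_iff_mul_le hz).mp h⟩, hzx, hzy⟩
  · intro p _; rfl
  · intro q _; rfl

lemma card_filter_pairMin_triplesProdLe (n : ℕ) :
    #((triplesProdLe n).filter fun p => p.1 = p.2.1 ∧ p.1 < p.2.2)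
      = ∑ z ∈ Icc 1 (icbrt n), #(Icc (z + 1) (n / z ^ 2)) := by
  rw [← card_sigma]
  refine card_nbij' (fun p => ⟨p.1, p.2.2⟩) (fun q => (q.1, q.1, q.2)) ?_ ?_ ?_ ?_
  · rintro ⟨x, y, w⟩ hp
    simp only [mem_coe, mem_filter, mem_triplesProdLe, mem_sigma, mem_Icc, le_icbrt_iff] at hp ⊢
    obtain ⟨⟨hx, -, -, h⟩, rfl, hxw⟩ := hp
    refine ⟨⟨hx, pow_three_le_of_le_of_le hxw.le le_rfl (by linarith [mul_comm (x * x) w])⟩, hxw,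
      (Nat.le_div_iff_mul_le (by positivity)).mpr (by linarith [mul_comm (x * x) w, sq x])⟩
  · rintro ⟨z, w⟩ hq
    simp only [mem_coe, mem_filter, mem_triplesProdLe, mem_sigma, mem_Icc, le_icbrt_iff] at hq ⊢
    obtain ⟨⟨hz, -⟩, hzw, h⟩ := hq
    have := (Nat.le_div_iff_mul_le (by positivity)).mp h
    exact ⟨⟨hz, hz, by omega, by linarith [mul_comm (z * z) w, sq z]⟩, trivial, hzw⟩
  · rintro ⟨x, y, w⟩ hp
    simp only [mem_coe, mem_filter] at hp
    simp [hp.2.1]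
  · intro q _; rfl

lemma card_filter_allEq_triplesProdLe (n : ℕ) :
    #((triplesProdLe n).filter fun p => p.1 = p.2.1 ∧ p.2.1 = p.2.2) = #(Icc 1 (icbrt n)) := by
  refine card_nbij' (fun p => p.1) (fun z => (z, z, z)) ?_ ?_ ?_ ?_
  · rintro ⟨x, y, w⟩ hp
    simp only [mem_coe, mem_filter, mem_triplesProdLe, mem_Icc, le_icbrt_iff] at hp ⊢
    obtain ⟨⟨hx, -, -, h⟩, rfl, rfl⟩ := hp
    exact ⟨hx, pow_three_le_of_le_of_le le_rfl le_rfl h⟩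
  · intro z hz
    simp only [mem_coe, mem_filter, mem_triplesProdLe, mem_Icc, le_icbrt_iff] at hz ⊢
    exact ⟨⟨hz.1, hz.1, hz.1, by linarith [hz.2, pow_three z, mul_assoc z z z]⟩, trivial, trivial⟩
  · rintro ⟨x, y, w⟩ hp
    simp only [mem_coe, mem_filter] at hp
    simp [hp.2.1, hp.2.2]
  · intro z _; rfl

lemma sum_Icc_three_mul_sq_sub_add_one (c : ℕ) :
    ∑ z ∈ Icc 1 c, (3 * (z : ℤ) ^ 2 - 3 * z + 1) = (c : ℤ) ^ 3 := by
  induction c with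
  | zero => simp
  | succ k ih =>
    rw [sum_Icc_succ_top (by omega), ih]
    push_cast
    ring

lemma le_sqrt_div_of_le_icbrt {n z : ℕ} (hz : z ≤ icbrt n) (hz0 : 0 < z) : z ≤ Nat.sqrt (n / z) :=
  Nat.le_sqrt.mpr <| (Nat.le_div_iff_mul_le hz0).mpr <| by
    linarith [le_icbrt_iff.mp hz, pow_three z, mul_assoc z z z]

lemma le_div_sq_of_le_icbrt {n z : ℕ} (hz : z ≤ icbrt n) (hz0 : 0 < z) : z ≤ n / z ^ 2 :=
  (Nat.le_div_iff_mul_le (by positivity)).mpr <| by linarith [le_icbrt_iff.mp hz, pow_succ z 2]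

theorem T3_shell_formula_general (n : ℕ) :
    ((((Finset.Icc 1 n ×ˢ Finset.Icc 1 n ×ˢ Finset.Icc 1 n).filter
        (fun p => p.1 * p.2.1 * p.2.2 ≤ n)).card : ℤ)
      = 3 * ∑ z ∈ Finset.Icc 1 (icbrt n),
          (2 * ∑ x ∈ Finset.Icc (z + 1) (Nat.sqrt (n / z)), ((n / z / x : ℕ) : ℤ)
            - ((Nat.sqrt (n / z) : ℤ)) ^ 2 + ((n / z ^ 2 : ℕ) : ℤ))
        + (icbrt n : ℤ) ^ 3) := by
  have hsplit := card_eq_of_rotate_mem (triplesProdLe n) rotate_mem_triplesProdLe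
  rw [card_filter_strictMin_triplesProdLe, card_filter_pairMin_triplesProdLe,
    card_filter_allEq_triplesProdLe, card_eq_sum_ones (Icc 1 (icbrt n)),
    mul_sum, mul_sum, ← sum_add_distrib, ← sum_add_distrib] at hsplit
  change (#(triplesProdLe n) : ℤ) = _
  rw [hsplit, ← sum_Icc_three_mul_sq_sub_add_one, mul_sum, ← sum_add_distrib, Nat.cast_sum]
  refine sum_congr rfl fun z hz => ?_
  obtain ⟨hz0, hzc⟩ := mem_Icc.mp hz
  have hdiv := le_div_sq_of_le_icbrt hzc hz0
  push_cast [card_hyperbolaRegion (le_sqrt_div_of_le_icbrt hzc hz0), Nat.card_Icc,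
    Nat.add_sub_add_right, Nat.cast_sub hdiv]
  ring

theorem T3_shell_formula (n : ℕ) (hn : 0 < n) :
    ((((Finset.Icc 1 n ×ˢ Finset.Icc 1 n ×ˢ Finset.Icc 1 n).filter
        (fun p => p.1 * p.2.1 * p.2.2 ≤ n)).card : ℤ)
      = 3 * ∑ z ∈ Finset.Icc 1 (icbrt n),
          (2 * ∑ x ∈ Finset.Icc (z + 1) (Nat.sqrt (n / z)), ((n / z / x : ℕ) : ℤ)
            - ((Nat.sqrt (n / z) : ℤ)) ^ 2 + ((n / z ^ 2 : ℕ) : ℤ))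
        + (icbrt n : ℤ) ^ 3) :=
  T3_shell_formula_general n
end

section
/- Define β(x) = ⌊n/x⌋, ε(x) = n mod x, δ₁(x) = β(x) − β(x+1), δ₂(x) = δ₁(x) − δ₁(x+1), and γ(x) = β(x) − (x−1)δ₁(x). Then for every integer x ≥ 1, ε(x) = ε(x+1) + γ(x+1) − x·δ₂(x). -/
/-! Writing `n % t = n - t * (n / t)` turns both sides into the same integer polynomial in
`n / x`, `n / (x + 1)` and `n / (x + 2)`. -/

theorem Nat.cast_mod_eq_sub_mul_div (n t : ℕ) : ((n % t : ℕ) : ℤ) = n - t * (n / t : ℕ) := by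
  rw [eq_sub_iff_add_eq]
  exact_mod_cast Nat.mod_add_div n t

theorem bresenham_error_recurrence_general (n : ℕ) (x : ℕ) :
    let β : ℕ → ℤ := fun t => ((n / t : ℕ) : ℤ)
    let ε : ℕ → ℤ := fun t => ((n % t : ℕ) : ℤ)
    let δ₁ : ℕ → ℤ := fun t => β t - β (t + 1)
    let δ₂ : ℕ → ℤ := fun t => δ₁ t - δ₁ (t + 1)
    let γ : ℕ → ℤ := fun t => β t - ((t : ℤ) - 1) * δ₁ t
    ε x = ε (x + 1) + γ (x + 1) - (x : ℤ) * δ₂ x := by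
  intro β ε δ₁ δ₂ γ
  simp only [ε, γ, δ₂, δ₁, β, Nat.cast_mod_eq_sub_mul_div]
  push_cast
  ring

theorem bresenham_error_recurrence (n : ℕ) (hn : 0 < n) (x : ℕ) (hx : 1 ≤ x) :
    let β : ℕ → ℤ := fun t => ((n / t : ℕ) : ℤ)
    let ε : ℕ → ℤ := fun t => ((n % t : ℕ) : ℤ)
    let δ₁ : ℕ → ℤ := fun t => β t - β (t + 1)
    let δ₂ : ℕ → ℤ := fun t => δ₁ t - δ₁ (t + 1)
    let γ : ℕ → ℤ := fun t => β t - ((t : ℤ) - 1) * δ₁ t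
    ε x = ε (x + 1) + γ (x + 1) - (x : ℤ) * δ₂ x :=
  bresenham_error_recurrence_general n x
end

section
/- With β(x) = ⌊n/x⌋, δ₁(x) = β(x) − β(x+1), δ₂(x) = δ₁(x) − δ₁(x+1): for all integers x with (2n)^{1/3} < x and x+2 ≤ √n (all quantities defined), δ₂(x) ∈ {−1, 0, 1, 2}. -/
/-! Since `⌊n/t⌋` lies in `(n/t - 1, n/t]`, the second difference `δ₂(x)` of `t ↦ ⌊n/t⌋` is within
`2` of the second difference of `t ↦ n/t`, which is `2n / (x(x+1)(x+2))`. For `x³ > 2n` this lies in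
`[0, 1)`, so the integer `δ₂(x)` lies in `(-2, 3)`. -/

section SecondDifference

variable {α : Type*} [Field α] [LinearOrder α] [IsStrictOrderedRing α]

lemma Nat.cast_div_mem_Ioc [FloorSemiring α] (m k : ℕ) :
    ((m / k : ℕ) : α) ∈ Set.Ioc ((m : α) / k - 1) ((m : α) / k) :=
  ⟨by simpa only [Nat.floor_div_eq_div] using Nat.sub_one_lt_floor ((m : α) / k), Nat.cast_div_le⟩

lemma div_sub_two_mul_div_add_div {x : α} (hx : 0 < x) (c : α) :
    c / x - 2 * (c / (x + 1)) + c / (x + 2) = 2 * c / (x * (x + 1) * (x + 2)) := by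
  have h₁ : x + 1 ≠ 0 := by positivity
  have h₂ : x + 2 ≠ 0 := by positivity
  field_simp
  ring

lemma Nat.cast_div_second_difference_mem_Ioo [FloorSemiring α] (n : ℕ) {x : ℕ} (hx : 0 < x) :
    ((n / x : ℕ) : α) - 2 * ((n / (x + 1) : ℕ) : α) + ((n / (x + 2) : ℕ) : α) ∈
      Set.Ioo ((2 * n : α) / (x * (x + 1) * (x + 2)) - 2)
        ((2 * n : α) / (x * (x + 1) * (x + 2)) + 2) := by
  have hx' : (0 : α) < x := by exact_mod_cast hx
  obtain ⟨ha₁, ha₂⟩ := Nat.cast_div_mem_Ioc (α := α) n x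
  obtain ⟨hb₁, hb₂⟩ := Nat.cast_div_mem_Ioc (α := α) n (x + 1)
  obtain ⟨hc₁, hc₂⟩ := Nat.cast_div_mem_Ioc (α := α) n (x + 2)
  push_cast at hb₁ hb₂ hc₁ hc₂
  rw [← div_sub_two_mul_div_add_div hx']
  constructor <;> linarith

lemma two_mul_div_mul_succ_mul_succ_lt_one {n x : ℕ} (h : 2 * n < x ^ 3) :
    (2 * n : α) / (x * (x + 1) * (x + 2)) < 1 := by
  have h' : (2 * n : α) < x ^ 3 := by exact_mod_cast h
  have hx : (0 : α) ≤ x := Nat.cast_nonneg x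
  rw [div_lt_one (by nlinarith)]
  nlinarith

end SecondDifference

theorem second_difference_bounded_general (n : ℕ) (x : ℕ)
    (hlow : 2 * n < x ^ 3) :
    let β : ℕ → ℤ := fun t => ((n / t : ℕ) : ℤ)
    let δ₁ : ℕ → ℤ := fun t => β t - β (t + 1)
    δ₁ x - δ₁ (x + 1) ∈ ({-1, 0, 1, 2} : Set ℤ) := by
  intro β δ₁
  have hx : 0 < x := Nat.pos_of_ne_zero (by rintro rfl; simp at hlow)
  have hδ : ((δ₁ x - δ₁ (x + 1) : ℤ) : ℚ) =
      ((n / x : ℕ) : ℚ) - 2 * ((n / (x + 1) : ℕ) : ℚ) + ((n / (x + 2) : ℕ) : ℚ) := by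
    simp only [δ₁, β, Int.cast_sub, Int.cast_natCast]
    ring
  obtain ⟨hlo, hhi⟩ := Nat.cast_div_second_difference_mem_Ioo (α := ℚ) n hx
  have hpos : (0 : ℚ) ≤ 2 * n / (x * (x + 1) * (x + 2)) := by positivity
  have hlt := two_mul_div_mul_succ_mul_succ_lt_one (α := ℚ) hlow
  have hd₁ : -2 < δ₁ x - δ₁ (x + 1) := by
    rw [← Int.cast_lt (R := ℚ), hδ]
    push_cast
    linarith
  have hd₂ : δ₁ x - δ₁ (x + 1) < 3 := by
    rw [← Int.cast_lt (R := ℚ), hδ]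
    push_cast
    linarith
  simp only [Set.mem_insert_iff, Set.mem_singleton_iff]
  omega

theorem second_difference_bounded (n : ℕ) (hn : 0 < n) (x : ℕ)
    (hlow : 2 * n < x ^ 3) (hhigh : (x + 2) ^ 2 ≤ n) :
    let β : ℕ → ℤ := fun t => ((n / t : ℕ) : ℤ)
    let δ₁ : ℕ → ℤ := fun t => β t - β (t + 1)
    δ₁ x - δ₁ (x + 1) ∈ ({-1, 0, 1, 2} : Set ℤ) :=
  second_difference_bounded_general n x hlow
end
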